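/- Bogolyubov's lemma: Let G be a finite additive (abelian) group, let δ > 0, and let A ⊆ G satisfy |A| ≥ δ|G|. Then there exists a set S ⊆ Ĝ with |S| ≤ 2δ^{−2} such that B(S, 1/4) ⊆ 2A − 2A, where 2A − 2A := {a₁ + a₂ − a₃ − a₄ : a₁, a₂, a₃, a₄ ∈ A}. -/

import Mathlib

/-- The Bohr set `B(S,ρ) = {x ∈ G : ‖ξ·x‖_{ℝ/ℤ} < ρ for all ξ ∈ S}`, where `S` is a finite
set of characters (homomorphisms `G → ℝ/ℤ`) and the norm on `ℝ/ℤ` is the distance to the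
nearest integer. -/
def bohr {G : Type*} [AddCommGroup G] (S : Finset (G →+ AddCircle (1 : ℝ))) (ρ : ℝ) : Set G :=
  {x | ∀ ξ ∈ S, ‖ξ x‖ < ρ}

/-!
Write `1̂_A(ψ) = ∑_{a ∈ A} ψ a` for complex characters `ψ` of `G` and `N = |G|`. Orthogonality
of characters gives `N · #{(a₁, a₂, a₃, a₄) ∈ A⁴ : a₁ + a₂ - a₃ - a₄ = x} = ∑_ψ |1̂_A(ψ)|⁴ Re ψ(x)`
and Parseval `∑_ψ |1̂_A(ψ)|² = N |A|`. Let `S` be the characters with `|1̂_A(ψ)|² ≥ (δ/2) |A|²`;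
Parseval bounds `|S| ≤ 2 δ⁻²`. If `x ∈ B(S, 1/4)` then `Re ψ(x) > 0` on `S`, the trivial
character contributes `|A|⁴`, and the characters outside `S` contribute at least
`-(δ/2) |A|² · N |A| ≥ -|A|⁴ / 2`, so the count is positive. Characters `G → ℝ/ℤ` and complex
characters correspond via `e(t) = exp(2πit)`, and `Re e(t) > 0` when `‖t‖ < 1/4`.
-/

open Finset ComplexConjugate

section
variable {G : Type*} [AddCommGroup G] [Fintype G]

lemma AddChar.sum_mul_conj_sum [DecidableEq G] {ι κ : Type*} (s : Finset ι) (t : Finset κ)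
    (f : ι → G) (g : κ → G) (x : G) :
    ∑ ψ : AddChar G ℂ, (∑ i ∈ s, ψ (f i)) * conj (∑ j ∈ t, ψ (g j)) * conj (ψ x) =
      Fintype.card G * #{p ∈ s ×ˢ t | f p.1 - g p.2 = x} := by
  have expand (ψ : AddChar G ℂ) :
      (∑ i ∈ s, ψ (f i)) * conj (∑ j ∈ t, ψ (g j)) * conj (ψ x) =
        ∑ p ∈ s ×ˢ t, ψ (f p.1 - g p.2 - x) := by
    rw [map_sum, sum_mul_sum, sum_mul, sum_product]
    simp only [sum_mul, ← AddChar.map_neg_eq_conj, sub_eq_add_neg, AddChar.map_add_eq_mul]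
  simp_rw [expand]
  rw [sum_comm]
  simp_rw [AddChar.sum_apply_eq_ite, sub_eq_zero]
  rw [sum_ite, sum_const_zero, add_zero, sum_const, nsmul_eq_mul, mul_comm]

lemma AddChar.sum_normSq_sum_apply (A : Finset G) :
    ∑ ψ : AddChar G ℂ, Complex.normSq (∑ a ∈ A, ψ a) = Fintype.card G * #A := by
  classical
  have h := AddChar.sum_mul_conj_sum A A id id 0
  simp only [id, AddChar.map_zero_eq_one, map_one, mul_one, Complex.mul_conj, sub_eq_zero] at h
  rw [show {p ∈ A ×ˢ A | p.1 = p.2} = A.diag by ext; simp [mem_diag]; grind, diag_card] at h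
  exact_mod_cast h

lemma AddChar.sum_normSq_sq_mul_re [DecidableEq G] (A : Finset G) (x : G) :
    ∑ ψ : AddChar G ℂ, Complex.normSq (∑ a ∈ A, ψ a) ^ 2 * (ψ x).re =
      Fintype.card G * #{p ∈ (A ×ˢ A) ×ˢ (A ×ˢ A) | p.1.1 + p.1.2 - (p.2.1 + p.2.2) = x} := by
  have h := congrArg Complex.re <|
    AddChar.sum_mul_conj_sum (A ×ˢ A) (A ×ˢ A) (fun p ↦ p.1 + p.2) (fun p ↦ p.1 + p.2) x
  have sq_sum (ψ : AddChar G ℂ) : ∑ p ∈ A ×ˢ A, ψ (p.1 + p.2) = (∑ a ∈ A, ψ a) ^ 2 := by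
    simp only [AddChar.map_add_eq_mul, sum_product, sq, sum_mul_sum]
  have term (ψ : AddChar G ℂ) :
      ((∑ p ∈ A ×ˢ A, ψ (p.1 + p.2)) * conj (∑ p ∈ A ×ˢ A, ψ (p.1 + p.2)) * conj (ψ x)).re =
        Complex.normSq (∑ a ∈ A, ψ a) ^ 2 * (ψ x).re := by
    rw [sq_sum, Complex.mul_conj, map_pow, Complex.re_ofReal_mul, Complex.conj_re]
  simp only [Complex.re_sum, term] at h
  exact_mod_cast h

open scoped Classical in
noncomputable def largeSpectrum (A : Finset G) (η : ℝ) : Finset (AddChar G ℂ) :=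
  {ψ | η * #A ^ 2 ≤ Complex.normSq (∑ a ∈ A, ψ a)}

lemma mem_largeSpectrum {A : Finset G} {η : ℝ} {ψ : AddChar G ℂ} :
    ψ ∈ largeSpectrum A η ↔ η * #A ^ 2 ≤ Complex.normSq (∑ a ∈ A, ψ a) := by
  simp [largeSpectrum]

lemma card_largeSpectrum_mul_le (A : Finset G) (η : ℝ) :
    #(largeSpectrum A η) * (η * #A ^ 2) ≤ Fintype.card G * #A := by
  calc #(largeSpectrum A η) * (η * #A ^ 2)
      ≤ ∑ ψ ∈ largeSpectrum A η, Complex.normSq (∑ a ∈ A, ψ a) := by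
        rw [← nsmul_eq_mul]
        exact card_nsmul_le_sum _ (fun ψ : AddChar G ℂ ↦ Complex.normSq (∑ a ∈ A, ψ a)) _
          fun ψ ↦ mem_largeSpectrum.1
    _ ≤ ∑ ψ : AddChar G ℂ, Complex.normSq (∑ a ∈ A, ψ a) :=
        sum_le_univ_sum_of_nonneg fun _ ↦ Complex.normSq_nonneg _
    _ = (Fintype.card G : ℝ) * #A := AddChar.sum_normSq_sum_apply A

lemma sum_normSq_sq_mul_re_pos {A : Finset G} {η : ℝ} {x : G} (hη : 0 ≤ η)
    (hA : η * Fintype.card G < #A) (hx : ∀ ψ ∈ largeSpectrum A η, 0 < (ψ x).re) :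
    0 < ∑ ψ : AddChar G ℂ, Complex.normSq (∑ a ∈ A, ψ a) ^ 2 * (ψ x).re := by
  set F : AddChar G ℂ → ℝ := fun ψ ↦ Complex.normSq (∑ a ∈ A, ψ a)
  have hAN : (#A : ℝ) ≤ Fintype.card G := mod_cast card_le_univ A
  have hA₀ : 0 < (#A : ℝ) := by nlinarith
  have hF₀ : F 0 = #A ^ 2 := by simp [F, sq]
  have on_spec : (#A : ℝ) ^ 4 ≤ ∑ ψ ∈ largeSpectrum A η, F ψ ^ 2 * (ψ x).re := by
    have h0 : (0 : AddChar G ℂ) ∈ largeSpectrum A η :=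
      mem_largeSpectrum.2 <| by change _ ≤ F 0; rw [hF₀]; nlinarith
    calc (#A : ℝ) ^ 4 = F 0 ^ 2 * ((0 : AddChar G ℂ) x).re := by simp [hF₀]; ring
      _ ≤ _ := single_le_sum (fun ψ hψ ↦ mul_nonneg (sq_nonneg _) (hx ψ hψ).le) h0
  have off_spec : -(η * #A ^ 2 * (Fintype.card G * #A)) ≤
      ∑ ψ ∈ (largeSpectrum A η)ᶜ, F ψ ^ 2 * (ψ x).re := by
    have term (ψ) (hψ : ψ ∈ (largeSpectrum A η)ᶜ) :
        -(η * #A ^ 2 * F ψ) ≤ F ψ ^ 2 * (ψ x).re := by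
      have hlt : F ψ < η * #A ^ 2 := by simpa [mem_largeSpectrum] using hψ
      have hre : -1 ≤ (ψ x).re := by
        simpa using neg_le_of_abs_le ((Complex.abs_re_le_norm (ψ x)).trans_eq (ψ.norm_apply x))
      nlinarith [Complex.normSq_nonneg (∑ a ∈ A, ψ a)]
    calc -(η * #A ^ 2 * (Fintype.card G * #A)) = -(η * #A ^ 2 * ∑ ψ : AddChar G ℂ, F ψ) := by
          rw [AddChar.sum_normSq_sum_apply]
      _ ≤ -(η * #A ^ 2 * ∑ ψ ∈ (largeSpectrum A η)ᶜ, F ψ) := by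
          gcongr
          · exact fun _ _ _ ↦ Complex.normSq_nonneg _
          · exact subset_univ _
      _ ≤ _ := by
          rw [mul_sum, ← sum_neg_distrib]
          exact sum_le_sum term
  rw [← sum_add_sum_compl (largeSpectrum A η)]
  nlinarith [pow_pos hA₀ 3]

lemma card_largeSpectrum_le {A : Finset G} {η δ : ℝ} (hη : 0 < η) (hδ : 0 < δ)
    (hA : δ * Fintype.card G ≤ #A) : #(largeSpectrum A η) ≤ (η * δ)⁻¹ := by
  have hA₀ : 0 < (#A : ℝ) := hA.trans_lt' (by positivity)
  have key := card_largeSpectrum_mul_le A η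
  rw [← one_div, le_div_iff₀ (by positivity)]
  have : (#(largeSpectrum A η) : ℝ) * (η * δ) * #A ^ 2 ≤ 1 * #A ^ 2 := by nlinarith
  exact le_of_mul_le_mul_right this (by positivity)

lemma exists_add_add_sub_sub_eq_of_re_pos {A : Finset G} {η : ℝ} {x : G} (hη : 0 ≤ η)
    (hA : η * Fintype.card G < #A) (hx : ∀ ψ ∈ largeSpectrum A η, 0 < (ψ x).re) :
    ∃ a₁ ∈ A, ∃ a₂ ∈ A, ∃ a₃ ∈ A, ∃ a₄ ∈ A, x = a₁ + a₂ - a₃ - a₄ := by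
  classical
  have hpos := sum_normSq_sq_mul_re_pos hη hA hx
  rw [AddChar.sum_normSq_sq_mul_re] at hpos
  have hcount : 0 < #{p ∈ (A ×ˢ A) ×ˢ (A ×ˢ A) | p.1.1 + p.1.2 - (p.2.1 + p.2.2) = x} := by
    exact_mod_cast pos_of_mul_pos_right hpos (Nat.cast_nonneg _)
  obtain ⟨⟨⟨a₁, a₂⟩, a₃, a₄⟩, hmem⟩ := card_pos.1 hcount
  simp only [mem_filter, mem_product] at hmem
  obtain ⟨⟨⟨h₁, h₂⟩, h₃, h₄⟩, rfl⟩ := hmem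
  exact ⟨a₁, h₁, a₂, h₂, a₃, h₃, a₄, h₄, by abel⟩

end

noncomputable def AddCircle.toCircleAddEquiv {T : ℝ} (hT : T ≠ 0) :
    AddCircle T ≃+ Additive Circle where
  toEquiv := (AddCircle.homeomorphCircle hT).toEquiv.trans Additive.ofMul
  map_add' x y := by simp [AddCircle.homeomorphCircle_apply, AddCircle.toCircle_add]

noncomputable def addMonoidHomEquivAddChar (G : Type*) [AddCommGroup G] [Finite G] {T : ℝ}
    (hT : T ≠ 0) : (G →+ AddCircle T) ≃ AddChar G ℂ :=
  (AddCircle.toCircleAddEquiv hT).addMonoidHomCongrRightEquiv.trans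
    (AddChar.toAddMonoidHomEquiv.symm.trans AddChar.circleEquivComplex.toEquiv)

@[simp] lemma addMonoidHomEquivAddChar_apply {G : Type*} [AddCommGroup G] [Finite G] {T : ℝ}
    (hT : T ≠ 0) (ξ : G →+ AddCircle T) (x : G) :
    addMonoidHomEquivAddChar G hT ξ x = AddCircle.toCircle (ξ x) :=
  congrArg ((↑) : Circle → ℂ) (AddCircle.homeomorphCircle_apply hT (ξ x))

lemma AddCircle.re_toCircle_pos {θ : UnitAddCircle} (hθ : ‖θ‖ < 1 / 4) :
    0 < (AddCircle.toCircle θ : ℂ).re := by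
  induction θ using QuotientAddGroup.induction_on with | H r => ?_
  rw [UnitAddCircle.norm_eq] at hθ
  rw [AddCircle.toCircle_apply_mk, Circle.coe_exp, div_one, Complex.exp_ofReal_mul_I_re,
    show 2 * Real.pi * r = 2 * Real.pi * (r - round r) + round r * (2 * Real.pi) by ring,
    Real.cos_add_int_mul_two_pi]
  obtain ⟨h₁, h₂⟩ := abs_lt.1 hθ
  apply Real.cos_pos_of_mem_Ioo
  constructor <;> nlinarith [Real.pi_pos]

/-- **Bogolyubov's lemma**: if `A ⊆ G` satisfies `|A| ≥ δ|G|` then there is a set `S ⊆ Ĝ`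
of at most `2δ^{-2}` characters such that `B(S, 1/4) ⊆ 2A - 2A`. -/
theorem bogolyubov {G : Type*} [AddCommGroup G] [Fintype G] (δ : ℝ) (hδ : 0 < δ)
    (A : Set G) (hA : δ * Fintype.card G ≤ (A.ncard : ℝ)) :
    ∃ S : Finset (G →+ AddCircle (1 : ℝ)),
      (S.card : ℝ) ≤ 2 * (δ ^ 2)⁻¹ ∧
      bohr S (1 / 4) ⊆
        {x | ∃ a₁ ∈ A, ∃ a₂ ∈ A, ∃ a₃ ∈ A, ∃ a₄ ∈ A, x = a₁ + a₂ - a₃ - a₄} := by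
  classical
  rw [Set.ncard_eq_toFinset_card'] at hA
  let e := addMonoidHomEquivAddChar G (one_ne_zero (α := ℝ))
  refine ⟨(largeSpectrum A.toFinset (δ / 2)).map e.symm.toEmbedding, ?_, ?_⟩
  · rw [card_map]
    convert card_largeSpectrum_le (half_pos hδ) hδ hA using 1
    field_simp
  · intro x hx
    have hre (ψ) (hψ : ψ ∈ largeSpectrum A.toFinset (δ / 2)) : 0 < (ψ x).re := by
      rw [← e.apply_symm_apply ψ, addMonoidHomEquivAddChar_apply]
      exact AddCircle.re_toCircle_pos (hx _ (mem_map_of_mem _ hψ))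
    have hdense : δ / 2 * Fintype.card G < #A.toFinset :=
      hA.trans_lt' (by have := Fintype.card_pos (α := G); gcongr; linarith)
    simpa using exists_add_add_sub_sub_eq_of_re_pos (half_pos hδ).le hdense hre
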